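/- arXiv:2004.08493 — 4 statements merged into one kernel-verified Lean document; each statement's English description precedes it below -/
import Mathlib

section
/- Let n be a 2-step nilpotent Lie algebra with inner product, z its center, v = z^⊥, and S : n → n a symmetric linear map. Then ⟨Y, [SY, Y]⟩ = 0 for all Y ∈ n if and only if (i) [SX, Y] = [X, SY] for all X,Y ∈ v, and (ii) for each X ∈ v the map Z ↦ P_z([X, S Z]) restricted to z is skew-symmetric on z, i.e. ⟨[X, SZ₁], Z₂⟩ + ⟨[X, SZ₂], Z₁⟩ = 0 for all Z₁,Z₂ ∈ z. -/
/-!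
The cubic form `Y ↦ ⟨Y, [SY, Y]⟩` vanishes identically iff its full polarization does. Since all
brackets are central and `v ⊥ z`, the polarization at `(D, X, Y)` with `D = [SX, Y] - [X, SY] ∈ z`
reduces to `⟨D, D⟩`, which gives (i), and at `(X, Z₁, Z₂)` it reduces to (ii). Conversely, write
`Y = Z + X` with `Z ∈ z`, `X ∈ v`: by (i) `[SX, X] = 0`, so the cubic form at `Y` reduces to
`⟨Z, [SZ, X]⟩`, which vanishes by (ii) with `Z₁ = Z₂ = Z`.
-/

def IsCentral {n : Type*} [LieRing n] (Z : n) : Prop := ∀ W : n, ⁅Z, W⁆ = 0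

/-- Membership in `v = zᗮ`, the orthogonal complement of the center with
respect to the inner product `ip`. -/
def InCenterPerp {n : Type*} [LieRing n] [LieAlgebra ℝ n]
    (ip : n →ₗ[ℝ] n →ₗ[ℝ] ℝ) (X : n) : Prop :=
  ∀ Z : n, IsCentral Z → ip X Z = 0

theorem LinearMap.BilinForm.exists_mem_add_mem_orthogonal {K V : Type*} [Field K]
    [AddCommGroup V] [Module K V] [FiniteDimensional K V] {B : LinearMap.BilinForm K V}
    (hB : B.IsRefl) (hanis : ∀ x, B x x = 0 → x = 0) (W : Submodule K V) (v : V) :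
    ∃ w ∈ W, ∃ u ∈ B.orthogonal W, w + u = v := by
  have hdisj : Disjoint W (B.orthogonal W) :=
    Submodule.disjoint_def.2 fun x hxW hx => hanis x ((B.mem_orthogonal_iff.1 hx) x hxW)
  have hv : v ∈ W ⊔ B.orthogonal W := by
    rw [((isCompl_orthogonal_iff_disjoint hB).2 hdisj).sup_eq_top]
    exact Submodule.mem_top
  exact Submodule.mem_sup.1 hv

theorem ip_lie_polarization {R L : Type*} [CommRing R] [LieRing L] [Module R L]
    (ip : L →ₗ[R] L →ₗ[R] R) (S : L →ₗ[R] L) (h : ∀ Y, ip Y ⁅S Y, Y⁆ = 0) (a b c : L) :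
    ip a ⁅S b, c⁆ + ip a ⁅S c, b⁆ + ip b ⁅S a, c⁆ + ip b ⁅S c, a⁆
      + ip c ⁅S a, b⁆ + ip c ⁅S b, a⁆ = 0 := by
  have habc := h (a + b + c)
  have hab := h (a + b)
  have hac := h (a + c)
  have hbc := h (b + c)
  simp only [map_add, add_lie, lie_add, LinearMap.add_apply] at habc hab hac hbc
  linear_combination habc - hab - hac - hbc + h a + h b + h c

section Center

variable {L : Type*} [LieRing L]

theorem IsCentral.lie_eq_zero {Z : L} (hZ : IsCentral Z) (x : L) : ⁅x, Z⁆ = 0 := by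
  rw [← lie_skew, hZ x, neg_zero]

theorem isCentral_lie (h2 : ∀ u v w : L, ⁅u, ⁅v, w⁆⁆ = 0) (u v : L) : IsCentral ⁅u, v⁆ :=
  fun w => by rw [← lie_skew, h2, neg_zero]

theorem isCentral_iff_mem_center {R : Type*} [CommRing R] [LieAlgebra R L] {Z : L} :
    IsCentral Z ↔ Z ∈ LieAlgebra.center R L := by
  rw [LieModule.mem_maxTrivSubmodule]
  exact forall_congr' fun x => by rw [← lie_skew, neg_eq_zero]

end Center

section TwoStep

variable {n : Type*} [LieRing n] [LieAlgebra ℝ n] (ip : n →ₗ[ℝ] n →ₗ[ℝ] ℝ) (S : n →ₗ[ℝ] n)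

theorem exists_isCentral_add_inCenterPerp [FiniteDimensional ℝ n]
    (ip_symm : ∀ x y : n, ip x y = ip y x) (hanis : ∀ x, ip x x = 0 → x = 0) (Y : n) :
    ∃ Z X, IsCentral Z ∧ InCenterPerp ip X ∧ Z + X = Y := by
  obtain ⟨Z, hZ, X, hX, rfl⟩ := LinearMap.BilinForm.exists_mem_add_mem_orthogonal
    (B := ip) (fun x y h => by rwa [ip_symm]) hanis (LieAlgebra.center ℝ n) Y
  refine ⟨Z, X, isCentral_iff_mem_center.2 hZ, fun W hW => ?_, rfl⟩
  rw [ip_symm]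
  exact LinearMap.BilinForm.mem_orthogonal_iff.1 hX W (isCentral_iff_mem_center.1 hW)

variable {ip S}

theorem lie_apply_comm_of_ip_lie_self_eq_zero (h2 : ∀ u v w : n, ⁅u, ⁅v, w⁆⁆ = 0)
    (hanis : ∀ x, ip x x = 0 → x = 0) (h : ∀ Y, ip Y ⁅S Y, Y⁆ = 0) {X Y : n}
    (hX : InCenterPerp ip X) (hY : InCenterPerp ip Y) : ⁅S X, Y⁆ = ⁅X, S Y⁆ := by
  set D := ⁅S X, Y⁆ - ⁅X, S Y⁆
  have hD : IsCentral D := fun W => by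
    rw [sub_lie, isCentral_lie h2 _ _ W, isCentral_lie h2 _ _ W, sub_zero]
  have hpol := ip_lie_polarization ip S h D X Y
  rw [hD.lie_eq_zero, hD.lie_eq_zero, hX _ (isCentral_lie h2 _ _),
    hY _ (isCentral_lie h2 _ _), ← lie_skew (S Y) X] at hpol
  simp only [map_zero, map_neg] at hpol
  have hDD : ip D D = ip D ⁅S X, Y⁆ - ip D ⁅X, S Y⁆ := map_sub (ip D) _ _
  exact sub_eq_zero.1 (hanis D (by linear_combination hDD + hpol))

theorem ip_lie_apply_skew_of_ip_lie_self_eq_zero (ip_symm : ∀ x y : n, ip x y = ip y x)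
    (h : ∀ Y, ip Y ⁅S Y, Y⁆ = 0) (X : n) {Z₁ Z₂ : n} (hZ₁ : IsCentral Z₁)
    (hZ₂ : IsCentral Z₂) : ip ⁅X, S Z₁⁆ Z₂ + ip ⁅X, S Z₂⁆ Z₁ = 0 := by
  have hpol := ip_lie_polarization ip S h X Z₁ Z₂
  rw [hZ₂.lie_eq_zero, hZ₁.lie_eq_zero, hZ₂.lie_eq_zero, hZ₁.lie_eq_zero,
    ← lie_skew (S Z₂) X, ← lie_skew (S Z₁) X] at hpol
  simp only [map_zero, map_neg] at hpol
  rw [ip_symm _ Z₂, ip_symm _ Z₁]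
  linear_combination -hpol

theorem ip_lie_self_eq_zero_of_isCentral_add (h2 : ∀ u v w : n, ⁅u, ⁅v, w⁆⁆ = 0)
    (ip_symm : ∀ x y : n, ip x y = ip y x) {Z X : n} (hZ : IsCentral Z)
    (hX : InCenterPerp ip X) (hi : ⁅S X, X⁆ = ⁅X, S X⁆)
    (hii : ip ⁅X, S Z⁆ Z + ip ⁅X, S Z⁆ Z = 0) :
    ip (Z + X) ⁅S (Z + X), Z + X⁆ = 0 := by
  have := IsAddTorsionFree.of_isTorsionFree ℝ n
  have hSXX : ⁅S X, X⁆ = 0 := self_eq_neg.1 (hi.trans (lie_skew X (S X)).symm)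
  have hZ_term : ip Z ⁅S Z, X⁆ = 0 := by
    rw [← lie_skew, map_neg, ip_symm, neg_eq_zero]
    exact self_eq_neg.1 (eq_neg_of_add_eq_zero_left hii)
  simp only [map_add, add_lie, lie_add, LinearMap.add_apply, hSXX, hZ.lie_eq_zero,
    hZ_term, hX _ (isCentral_lie h2 _ _), map_zero, add_zero]

end TwoStep

theorem two_step_quadratic_first_integral_iff_general
    {n : Type*} [LieRing n] [LieAlgebra ℝ n] [FiniteDimensional ℝ n]
    (h2 : ∀ u v w : n, ⁅u, ⁅v, w⁆⁆ = 0)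
    (ip : n →ₗ[ℝ] n →ₗ[ℝ] ℝ)
    (ip_symm : ∀ x y : n, ip x y = ip y x)
    (ip_pos : ∀ x : n, x ≠ 0 → 0 < ip x x)
    (S : n →ₗ[ℝ] n) :
    (∀ Y : n, ip Y ⁅S Y, Y⁆ = 0) ↔
      ((∀ X Y : n, InCenterPerp ip X → InCenterPerp ip Y →
          ⁅S X, Y⁆ = ⁅X, S Y⁆) ∧
       (∀ X : n, InCenterPerp ip X →
          ∀ Z₁ Z₂ : n, IsCentral Z₁ → IsCentral Z₂ →
            ip ⁅X, S Z₁⁆ Z₂ + ip ⁅X, S Z₂⁆ Z₁ = 0)) := by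
  have hanis : ∀ x, ip x x = 0 → x = 0 := fun x hx =>
    not_not.1 fun hx0 => (ip_pos x hx0).ne' hx
  refine ⟨fun h => ⟨fun X Y hX hY => lie_apply_comm_of_ip_lie_self_eq_zero h2 hanis h hX hY,
    fun X _ Z₁ Z₂ hZ₁ hZ₂ => ip_lie_apply_skew_of_ip_lie_self_eq_zero ip_symm h X hZ₁ hZ₂⟩,
    fun ⟨hi, hii⟩ Y => ?_⟩
  obtain ⟨Z, X, hZ, hX, rfl⟩ := exists_isCentral_add_inCenterPerp ip ip_symm hanis Y
  exact ip_lie_self_eq_zero_of_isCentral_add h2 ip_symm hZ hX (hi X X hX hX) (hii X hX Z Z hZ hZ)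

/-- In a 2-step nilpotent metric Lie algebra `n = v ⊕ z`, a
symmetric map `S` satisfies `⟨Y,[SY,Y]⟩ = 0` for all `Y` iff
(i) `[SX,Y] = [X,SY]` on `v` and (ii) `Z ↦ [X,SZ]` is skew-symmetric on the
center `z`, for every `X ∈ v`. -/
theorem two_step_quadratic_first_integral_iff
    {n : Type*} [LieRing n] [LieAlgebra ℝ n] [FiniteDimensional ℝ n]
    (h2 : ∀ u v w : n, ⁅u, ⁅v, w⁆⁆ = 0)
    (ip : n →ₗ[ℝ] n →ₗ[ℝ] ℝ)
    (ip_symm : ∀ x y : n, ip x y = ip y x)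
    (ip_pos : ∀ x : n, x ≠ 0 → 0 < ip x x)
    (S : n →ₗ[ℝ] n)
    (hSsym : ∀ x y : n, ip (S x) y = ip x (S y)) :
    (∀ Y : n, ip Y ⁅S Y, Y⁆ = 0) ↔
      ((∀ X Y : n, InCenterPerp ip X → InCenterPerp ip Y →
          ⁅S X, Y⁆ = ⁅X, S Y⁆) ∧
       (∀ X : n, InCenterPerp ip X →
          ∀ Z₁ Z₂ : n, IsCentral Z₁ → IsCentral Z₂ →
            ip ⁅X, S Z₁⁆ Z₂ + ip ⁅X, S Z₂⁆ Z₁ = 0)) :=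
  two_step_quadratic_first_integral_iff_general h2 ip ip_symm ip_pos S
end

section
/- In the free 3-step nilpotent Lie algebra n_{2,3} in two generators with orthonormal basis e1,...,e5 and brackets [e1,e2]=e3, [e1,e3]=e4, [e2,e3]=e5, every skew-symmetric derivation D satisfies: D e1 = α e2, D e2 = -α e1, D e3 = 0, D e4 = α e5, D e5 = -α e4 for some α ∈ ℝ. -/
/-!
A derivation maps every bracket into the derived algebra `span {e₃, e₄, e₅}`, so it
preserves that subspace; being skew-symmetric, it then also preserves the orthogonal
complement `span {e₁, e₂}`, on which it must be a rotation `e₁ ↦ α e₂`, `e₂ ↦ -α e₁`.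
Since `e₃, e₄, e₅` are brackets of `e₁, e₂, e₃`, the derivation rule determines `D` on
them from this rotation. The Lean basis is indexed from `0`: `e i` is the paper's `e_{i+1}`.
-/

open Submodule Set

section BilinearForm

variable {R M ι : Type*} [CommRing R] [AddCommGroup M] [Module R M]
  {ip : M →ₗ[R] M →ₗ[R] R} {e : ι → M}

theorem ip_apply_eq_neg_of_skew (ip_symm : ∀ x y : M, ip x y = ip y x) {D : M →ₗ[R] M}
    (hskew : ∀ X Y : M, ip (D X) Y + ip X (D Y) = 0) (x y : M) :
    ip x (D y) = -ip y (D x) := by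
  rw [eq_neg_iff_add_eq_zero, add_comm, ← ip_symm, hskew]

theorem ip_eq_zero_of_mem_span_image [DecidableEq ι]
    (horth : ∀ i j, ip (e i) (e j) = if i = j then 1 else 0) {s : Set ι} {i : ι} (hi : i ∉ s)
    {x : M} (hx : x ∈ span R (e '' s)) : ip (e i) x = 0 := by
  refine (span_le (p := LinearMap.ker (ip (e i)))).mpr ?_ hx
  rintro _ ⟨j, hj, rfl⟩
  simp [horth, (ne_of_mem_of_not_mem hj hi).symm]

end BilinearForm

section PositiveDefinite

variable {M ι : Type*} [AddCommGroup M] [Module ℝ M]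
  {ip : M →ₗ[ℝ] M →ₗ[ℝ] ℝ} {e : ι → M}

theorem eq_of_forall_ip_eq (ip_pos : ∀ x : M, x ≠ 0 → 0 < ip x x)
    (hspan : span ℝ (range e) = ⊤) {x y : M} (h : ∀ i, ip (e i) x = ip (e i) y) : x = y := by
  have hflip : ip.flip (x - y) = 0 :=
    LinearMap.ext_on_range hspan fun i => by simp [h i]
  by_contra hne
  have := ip_pos _ (sub_ne_zero.mpr hne)
  rw [← LinearMap.flip_apply (f := ip), hflip] at this
  exact lt_irrefl 0 this

theorem eq_ip_smul_of_forall_ne [DecidableEq ι]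
    (horth : ∀ i j, ip (e i) (e j) = if i = j then 1 else 0)
    (ip_pos : ∀ x : M, x ≠ 0 → 0 < ip x x) (hspan : span ℝ (range e) = ⊤) {x : M} {j : ι}
    (h : ∀ i, i ≠ j → ip (e i) x = 0) : x = ip (e j) x • e j := by
  refine eq_of_forall_ip_eq ip_pos hspan fun i => ?_
  rw [map_smul, horth, smul_eq_mul]
  by_cases hij : i = j
  · simp [hij]
  · simp [hij, h i hij]

end PositiveDefinite

section LieAlgebra

variable {R L : Type*} [CommRing R] [LieRing L] [LieAlgebra R L]

theorem lie_mem_of_forall_lie_mem {ι : Type*} {e : ι → L} (hspan : span R (range e) = ⊤)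
    {V : Submodule R L} {y : L} (h : ∀ i, ⁅y, e i⁆ ∈ V) (x : L) : ⁅y, x⁆ ∈ V := by
  have hmap : (span R (range e)).map (LieAlgebra.ad R L y) ≤ V :=
    (map_span_le _ _ _).mpr (by rintro _ ⟨i, rfl⟩; exact h i)
  exact hmap ⟨x, hspan ▸ mem_top, rfl⟩

theorem map_span_two_three_four_le {e : Fin 5 → L} (hspan : span R (range e) = ⊤)
    (h12 : ⁅e 0, e 1⁆ = e 2) (h13 : ⁅e 0, e 2⁆ = e 3) (h23 : ⁅e 1, e 2⁆ = e 4)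
    (h14 : ⁅e 0, e 3⁆ = 0) (h15 : ⁅e 0, e 4⁆ = 0)
    (h24 : ⁅e 1, e 3⁆ = 0) (h25 : ⁅e 1, e 4⁆ = 0)
    (h34 : ⁅e 2, e 3⁆ = 0) (h35 : ⁅e 2, e 4⁆ = 0)
    (D : L →ₗ[R] L) (hder : ∀ X Y : L, D ⁅X, Y⁆ = ⁅D X, Y⁆ + ⁅X, D Y⁆) :
    (span R (e '' {2, 3, 4})).map D ≤ span R (e '' {2, 3, 4}) := by
  set V := span R (e '' {2, 3, 4})
  have mem : ∀ k ∈ ({2, 3, 4} : Set (Fin 5)), e k ∈ V := fun k hk =>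
    subset_span (mem_image_of_mem e hk)
  have h21 : ⁅e 1, e 0⁆ = -e 2 := by rw [← lie_skew, h12]
  have h31 : ⁅e 2, e 0⁆ = -e 3 := by rw [← lie_skew, h13]
  have h32 : ⁅e 2, e 1⁆ = -e 4 := by rw [← lie_skew, h23]
  have ad0 : ∀ x, ⁅e 0, x⁆ ∈ V := lie_mem_of_forall_lie_mem hspan fun i => by
    fin_cases i <;> simp [h12, h13, h14, h15, mem]
  have ad1 : ∀ x, ⁅e 1, x⁆ ∈ V := lie_mem_of_forall_lie_mem hspan fun i => by
    fin_cases i <;> simp [h21, h23, h24, h25, mem]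
  have ad2 : ∀ x, ⁅e 2, x⁆ ∈ V := lie_mem_of_forall_lie_mem hspan fun i => by
    fin_cases i <;> simp [h31, h32, h34, h35, mem]
  have hD : ∀ a b, D ⁅a, b⁆ = ⁅a, D b⁆ - ⁅b, D a⁆ := fun a b => by
    rw [hder, ← lie_skew (D a) b]; abel
  rw [map_span_le]
  rintro _ ⟨k, hk, rfl⟩
  simp only [mem_insert_iff, mem_singleton_iff] at hk
  rcases hk with rfl | rfl | rfl
  · rw [← h12, hD]; exact sub_mem (ad0 _) (ad1 _)
  · rw [← h13, hD]; exact sub_mem (ad0 _) (ad2 _)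
  · rw [← h23, hD]; exact sub_mem (ad1 _) (ad2 _)

end LieAlgebra

theorem skew_derivations_of_free_three_step_general
    {n : Type*} [LieRing n] [LieAlgebra ℝ n]
    (ip : n →ₗ[ℝ] n →ₗ[ℝ] ℝ)
    (ip_symm : ∀ x y : n, ip x y = ip y x)
    (ip_pos : ∀ x : n, x ≠ 0 → 0 < ip x x)
    (e : Fin 5 → n)
    (horth : ∀ i j : Fin 5, ip (e i) (e j) = if i = j then 1 else 0)
    (hspan : Submodule.span ℝ (Set.range e) = ⊤)
    (h12 : ⁅e 0, e 1⁆ = e 2) (h13 : ⁅e 0, e 2⁆ = e 3) (h23 : ⁅e 1, e 2⁆ = e 4)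
    (h14 : ⁅e 0, e 3⁆ = 0) (h15 : ⁅e 0, e 4⁆ = 0)
    (h24 : ⁅e 1, e 3⁆ = 0) (h25 : ⁅e 1, e 4⁆ = 0)
    (h34 : ⁅e 2, e 3⁆ = 0) (h35 : ⁅e 2, e 4⁆ = 0)
    (D : n →ₗ[ℝ] n)
    (hder : ∀ X Y : n, D ⁅X, Y⁆ = ⁅D X, Y⁆ + ⁅X, D Y⁆)
    (hskew : ∀ X Y : n, ip (D X) Y + ip X (D Y) = 0) :
    ∃ α : ℝ, D (e 0) = α • e 1 ∧ D (e 1) = -α • e 0 ∧ D (e 2) = 0 ∧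
      D (e 3) = α • e 4 ∧ D (e 4) = -α • e 3 := by
  have skew := ip_apply_eq_neg_of_skew ip_symm hskew
  have hV := map_span_two_three_four_le hspan h12 h13 h23 h14 h15 h24 h25 h34 h35 D hder
  have hperp : ∀ i k, i ∉ ({2, 3, 4} : Set (Fin 5)) → k ∈ ({2, 3, 4} : Set (Fin 5)) →
      ip (e k) (D (e i)) = 0 := fun i k hi hk => by
    rw [skew, neg_eq_zero]
    exact ip_eq_zero_of_mem_span_image horth hi (hV ⟨e k, subset_span ⟨k, hk, rfl⟩, rfl⟩)
  have hdiag : ∀ x, ip x (D x) = 0 := fun x => by linarith [skew x x]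
  set α := ip (e 1) (D (e 0))
  have hD0 : D (e 0) = α • e 1 := eq_ip_smul_of_forall_ne horth ip_pos hspan fun k hk => by
    fin_cases k <;>
      first | exact (hk rfl).elim | exact hdiag _ | exact hperp 0 _ (by simp) (by simp)
  have hD1 : D (e 1) = -α • e 0 := by
    have h := eq_ip_smul_of_forall_ne horth ip_pos hspan (x := D (e 1)) (j := 0) fun k hk => by
      fin_cases k <;>
        first | exact (hk rfl).elim | exact hdiag _ | exact hperp 1 _ (by simp) (by simp)
    rwa [skew] at h
  have hD2 : D (e 2) = 0 := by
    rw [← h12, hder, hD0, hD1, smul_lie, lie_smul, lie_self, lie_self, smul_zero, smul_zero,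
      add_zero]
  refine ⟨α, hD0, hD1, hD2, ?_, ?_⟩
  · rw [← h13, hder, hD0, hD2, smul_lie, h23, lie_zero, add_zero]
  · rw [← h23, hder, hD1, hD2, smul_lie, h13, lie_zero, add_zero]

/-- In the free 3-step nilpotent Lie algebra `n₂,₃` in two
generators, with orthonormal basis `e₁,…,e₅` and brackets `[e₁,e₂]=e₃`,
`[e₁,e₃]=e₄`, `[e₂,e₃]=e₅` (all other basis brackets zero), every
skew-symmetric derivation `D` has the form `De₁ = αe₂`, `De₂ = -αe₁`,
`De₃ = 0`, `De₄ = αe₅`, `De₅ = -αe₄` for some `α ∈ ℝ`. -/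
theorem skew_derivations_of_free_three_step
    {n : Type*} [LieRing n] [LieAlgebra ℝ n]
    (ip : n →ₗ[ℝ] n →ₗ[ℝ] ℝ)
    (ip_symm : ∀ x y : n, ip x y = ip y x)
    (ip_pos : ∀ x : n, x ≠ 0 → 0 < ip x x)
    (e : Fin 5 → n)
    (horth : ∀ i j : Fin 5, ip (e i) (e j) = if i = j then 1 else 0)
    (hspan : Submodule.span ℝ (Set.range e) = ⊤)
    (h12 : ⁅e 0, e 1⁆ = e 2) (h13 : ⁅e 0, e 2⁆ = e 3) (h23 : ⁅e 1, e 2⁆ = e 4)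
    (h14 : ⁅e 0, e 3⁆ = 0) (h15 : ⁅e 0, e 4⁆ = 0)
    (h24 : ⁅e 1, e 3⁆ = 0) (h25 : ⁅e 1, e 4⁆ = 0)
    (h34 : ⁅e 2, e 3⁆ = 0) (h35 : ⁅e 2, e 4⁆ = 0) (h45 : ⁅e 3, e 4⁆ = 0)
    (D : n →ₗ[ℝ] n)
    (hder : ∀ X Y : n, D ⁅X, Y⁆ = ⁅D X, Y⁆ + ⁅X, D Y⁆)
    (hskew : ∀ X Y : n, ip (D X) Y + ip X (D Y) = 0) :
    ∃ α : ℝ, D (e 0) = α • e 1 ∧ D (e 1) = -α • e 0 ∧ D (e 2) = 0 ∧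
      D (e 3) = α • e 4 ∧ D (e 4) = -α • e 3 :=
  skew_derivations_of_free_three_step_general ip ip_symm ip_pos e horth hspan h12 h13 h23 h14 h15
    h24 h25 h34 h35 D hder hskew
end

section
/- In the 5-dimensional 3-step nilpotent Lie algebra n_1 with orthonormal basis e1,...,e5 and brackets [e1,e2]=e3, [e1,e3]=e5, [e2,e4]=e5, every skew-symmetric derivation D satisfies D e1 = α e2, D e2 = -α e1 + β e4, D e3 = 0, D e4 = -β e2, D e5 = 0 for some α, β ∈ ℝ. -/
/-!
Write `a i j = ip (D eᵢ) eⱼ`; skew-symmetry makes this matrix antisymmetric. In the orthonormal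
basis each `ad eᵢ` has an explicit matrix (e.g. `⁅e₁, x⁆ = x₂ e₃ + x₃ e₅`), so pairing the
derivation identity `D⁅eᵢ, eⱼ⁆ = ⁅eᵢ, D eⱼ⁆ - ⁅eⱼ, D eᵢ⁆` with basis vectors gives linear
equations in the `a i j`, and nine of them together with antisymmetry kill every entry. Hence every
skew-symmetric derivation of `n₁` is zero and the statement holds with `α = β = 0`; indeed the
derivation identity for `⁅e₁, e₄⁆ = 0` already forces `α e₅ - β e₃ = 0`.
-/

section OrthonormalFamily

variable {R M ι : Type*} [CommRing R] [AddCommGroup M] [Module R M] [Fintype ι]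
  {ip : M →ₗ[R] M →ₗ[R] R} {e : ι → M}

theorem eq_zero_of_forall_apply_eq_zero (hanis : ∀ x, ip x x = 0 → x = 0)
    (hspan : Submodule.span R (Set.range e) = ⊤) {x : M} (hx : ∀ j, ip x (e j) = 0) : x = 0 := by
  obtain ⟨c, hc⟩ :=
    (Submodule.mem_span_range_iff_exists_fun R).1 (hspan ▸ Submodule.mem_top : x ∈ _)
  refine hanis x ?_
  calc ip x x = ip x (∑ i, c i • e i) := by rw [hc]
    _ = 0 := by simp [hx]

theorem sum_apply_smul_eq_self [DecidableEq ι]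
    (horth : ∀ i j, ip (e i) (e j) = if i = j then 1 else 0) (hanis : ∀ x, ip x x = 0 → x = 0)
    (hspan : Submodule.span R (Set.range e) = ⊤) (x : M) :
    ∑ j, ip x (e j) • e j = x := by
  rw [← sub_eq_zero]
  refine eq_zero_of_forall_apply_eq_zero hanis hspan fun k => ?_
  simp [horth]

end OrthonormalFamily

section LieAlgebra

variable {R L ι : Type*} [CommRing R] [LieRing L] [LieAlgebra R L] [Fintype ι] [DecidableEq ι]
  {ip : L →ₗ[R] L →ₗ[R] R} {e : ι → L}

theorem lie_eq_sum_apply_smul_lie (horth : ∀ i j, ip (e i) (e j) = if i = j then 1 else 0)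
    (hanis : ∀ x, ip x x = 0 → x = 0) (hspan : Submodule.span R (Set.range e) = ⊤) (y x : L) :
    ⁅y, x⁆ = ∑ j, ip x (e j) • ⁅y, e j⁆ := by
  conv_lhs => rw [← sum_apply_smul_eq_self horth hanis hspan x]
  simp only [lie_sum, lie_smul]

end LieAlgebra

/-- `e 0, …, e 4` play the role of `e₁, …, e₅`. -/
structure IsN1Basis {L : Type*} [LieRing L] (e : Fin 5 → L) : Prop where
  lie_e0_e1 : ⁅e 0, e 1⁆ = e 2
  lie_e0_e2 : ⁅e 0, e 2⁆ = e 4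
  lie_e1_e3 : ⁅e 1, e 3⁆ = e 4
  lie_e0_e3 : ⁅e 0, e 3⁆ = 0
  lie_e0_e4 : ⁅e 0, e 4⁆ = 0
  lie_e1_e2 : ⁅e 1, e 2⁆ = 0
  lie_e1_e4 : ⁅e 1, e 4⁆ = 0
  lie_e2_e3 : ⁅e 2, e 3⁆ = 0
  lie_e2_e4 : ⁅e 2, e 4⁆ = 0
  lie_e3_e4 : ⁅e 3, e 4⁆ = 0

namespace IsN1Basis

section CommRing

variable {R L : Type*} [CommRing R] [LieRing L] [LieAlgebra R L] {ip : L →ₗ[R] L →ₗ[R] R}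
  {e : Fin 5 → L} (he : IsN1Basis e)
  (horth : ∀ i j, ip (e i) (e j) = if i = j then 1 else 0)
  (hanis : ∀ x, ip x x = 0 → x = 0) (hspan : Submodule.span R (Set.range e) = ⊤)
include he horth hanis hspan

theorem lie_e0 (x : L) : ⁅e 0, x⁆ = ip x (e 1) • e 2 + ip x (e 2) • e 4 := by
  rw [lie_eq_sum_apply_smul_lie horth hanis hspan, Fin.sum_univ_five]
  simp [he.lie_e0_e1, he.lie_e0_e2, he.lie_e0_e3, he.lie_e0_e4]

theorem lie_e1 (x : L) : ⁅e 1, x⁆ = -ip x (e 0) • e 2 + ip x (e 3) • e 4 := by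
  rw [lie_eq_sum_apply_smul_lie horth hanis hspan, Fin.sum_univ_five, ← lie_skew (e 1) (e 0)]
  simp [he.lie_e0_e1, he.lie_e1_e2, he.lie_e1_e3, he.lie_e1_e4]

theorem lie_e2 (x : L) : ⁅e 2, x⁆ = -ip x (e 0) • e 4 := by
  rw [lie_eq_sum_apply_smul_lie horth hanis hspan, Fin.sum_univ_five, ← lie_skew (e 2) (e 0),
    ← lie_skew (e 2) (e 1)]
  simp [he.lie_e0_e2, he.lie_e1_e2, he.lie_e2_e3, he.lie_e2_e4]

theorem lie_e3 (x : L) : ⁅e 3, x⁆ = -ip x (e 1) • e 4 := by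
  rw [lie_eq_sum_apply_smul_lie horth hanis hspan, Fin.sum_univ_five, ← lie_skew (e 3) (e 0),
    ← lie_skew (e 3) (e 1), ← lie_skew (e 3) (e 2)]
  simp [he.lie_e0_e3, he.lie_e1_e3, he.lie_e2_e3, he.lie_e3_e4]

theorem lie_e4 (x : L) : ⁅e 4, x⁆ = 0 := by
  rw [lie_eq_sum_apply_smul_lie horth hanis hspan, Fin.sum_univ_five, ← lie_skew (e 4) (e 0),
    ← lie_skew (e 4) (e 1), ← lie_skew (e 4) (e 2), ← lie_skew (e 4) (e 3)]
  simp [he.lie_e0_e4, he.lie_e1_e4, he.lie_e2_e4, he.lie_e3_e4]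

end CommRing

variable {R L : Type*} [Field R] [CharZero R] [LieRing L] [LieAlgebra R L]
  {ip : L →ₗ[R] L →ₗ[R] R} {e : Fin 5 → L}

theorem skew_derivation_apply_eq_zero (he : IsN1Basis e)
    (horth : ∀ i j, ip (e i) (e j) = if i = j then 1 else 0)
    (hanis : ∀ x, ip x x = 0 → x = 0) (hspan : Submodule.span R (Set.range e) = ⊤)
    (hsymm : ∀ x y, ip x y = ip y x) {D : L →ₗ[R] L}
    (hder : ∀ x y, D ⁅x, y⁆ = ⁅D x, y⁆ + ⁅x, D y⁆) (hskew : ∀ x y, ip (D x) y + ip x (D y) = 0)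
    (i : Fin 5) : D (e i) = 0 := by
  have skew (i j : Fin 5) : ip (D (e i)) (e j) = -ip (D (e j)) (e i) := by
    linear_combination hskew (e i) (e j) - hsymm (e i) (D (e j))
  have diag (i : Fin 5) : ip (D (e i)) (e i) = 0 := self_eq_neg.mp (skew i i)
  have der (i j k : Fin 5) :
      ip (D ⁅e i, e j⁆) (e k) = ip ⁅e i, D (e j)⁆ (e k) - ip ⁅e j, D (e i)⁆ (e k) := by
    rw [hder, ← lie_skew (D (e i)), map_add, map_neg, LinearMap.add_apply, LinearMap.neg_apply]
    ring
  have ad0 := he.lie_e0 horth hanis hspan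
  have ad1 := he.lie_e1 horth hanis hspan
  have ad2 := he.lie_e2 horth hanis hspan
  have ad3 := he.lie_e3 horth hanis hspan
  have ad4 := he.lie_e4 horth hanis hspan
  have h40 : ip (D (e 4)) (e 0) = 0 := by simpa [ad1, ad4, horth] using der 1 4 2
  have h41 : ip (D (e 4)) (e 1) = 0 := by simpa [ad0, ad4, horth] using (der 0 4 2).symm
  have h42 : ip (D (e 4)) (e 2) = 0 := by simpa [ad0, ad4, horth] using (der 0 4 4).symm
  have h43 : ip (D (e 4)) (e 3) = 0 := by simpa [ad1, ad4, horth] using (der 1 4 4).symm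
  have h30 : ip (D (e 3)) (e 0) = 0 := by simpa [ad1, ad3, horth, h42] using der 1 3 2
  have h31 : ip (D (e 3)) (e 1) = 0 := by simpa [ad0, ad3, horth] using (der 0 3 2).symm
  have h23 : ip (D (e 2)) (e 3) = 0 := by simpa [ad0, ad1, horth] using der 0 1 3
  have h32 : ip (D (e 3)) (e 2) = 0 := by rw [skew, h23, neg_zero]
  have h20 : ip (D (e 2)) (e 0) = 0 := by simpa [ad1, ad2, horth] using der 1 2 2
  have h21 : ip (D (e 2)) (e 1) = 0 := by simpa [ad0, ad2, horth, h42] using (der 0 2 2).symm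
  have h10 : ip (D (e 1)) (e 0) = 0 := by simpa [ad1, ad2, horth, h23] using (der 1 2 4).symm
  have lower (i j : Fin 5) (hji : j < i) : ip (D (e i)) (e j) = 0 := by
    fin_cases i <;> fin_cases j <;> first | exact absurd hji (by decide) | assumption
  refine eq_zero_of_forall_apply_eq_zero hanis hspan fun j => ?_
  rcases lt_trichotomy i j with hij | rfl | hji
  · rw [skew, lower j i hij, neg_zero]
  · exact diag i
  · exact lower i j hji

end IsN1Basis

/-- In the 5-dimensional 3-step nilpotent Lie algebra `n₁` with
orthonormal basis `e₁,…,e₅` and brackets `[e₁,e₂]=e₃`, `[e₁,e₃]=e₅`,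
`[e₂,e₄]=e₅` (all other basis brackets zero), every skew-symmetric derivation
`D` satisfies `De₁ = αe₂`, `De₂ = -αe₁ + βe₄`, `De₃ = 0`, `De₄ = -βe₂`,
`De₅ = 0` for some `α, β ∈ ℝ`. -/
theorem skew_derivations_of_n1
    {n : Type*} [LieRing n] [LieAlgebra ℝ n]
    (ip : n →ₗ[ℝ] n →ₗ[ℝ] ℝ)
    (ip_symm : ∀ x y : n, ip x y = ip y x)
    (ip_pos : ∀ x : n, x ≠ 0 → 0 < ip x x)
    (e : Fin 5 → n)
    (horth : ∀ i j : Fin 5, ip (e i) (e j) = if i = j then 1 else 0)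
    (hspan : Submodule.span ℝ (Set.range e) = ⊤)
    (h12 : ⁅e 0, e 1⁆ = e 2) (h13 : ⁅e 0, e 2⁆ = e 4) (h24 : ⁅e 1, e 3⁆ = e 4)
    (h14 : ⁅e 0, e 3⁆ = 0) (h15 : ⁅e 0, e 4⁆ = 0)
    (h23 : ⁅e 1, e 2⁆ = 0) (h25 : ⁅e 1, e 4⁆ = 0)
    (h34 : ⁅e 2, e 3⁆ = 0) (h35 : ⁅e 2, e 4⁆ = 0) (h45 : ⁅e 3, e 4⁆ = 0)
    (D : n →ₗ[ℝ] n)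
    (hder : ∀ X Y : n, D ⁅X, Y⁆ = ⁅D X, Y⁆ + ⁅X, D Y⁆)
    (hskew : ∀ X Y : n, ip (D X) Y + ip X (D Y) = 0) :
    ∃ α β : ℝ, D (e 0) = α • e 1 ∧ D (e 1) = -α • e 0 + β • e 3 ∧
      D (e 2) = 0 ∧ D (e 3) = -β • e 1 ∧ D (e 4) = 0 := by
  have hanis : ∀ x : n, ip x x = 0 → x = 0 := fun x hx =>
    by_contra fun hne => (ip_pos x hne).ne' hx
  have he : IsN1Basis e := ⟨h12, h13, h24, h14, h15, h23, h25, h34, h35, h45⟩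
  have hD := he.skew_derivation_apply_eq_zero horth hanis hspan ip_symm hder hskew
  exact ⟨0, 0, by simp [hD]⟩
end

section
/- Let n be a 3-step nilpotent Lie algebra, D a derivation of n, and W, X ∈ n. Define Ad_{-W}(X) = X - [W,X] + (1/2)[W,[W,X]]. Then D(Ad_{-W}(X)) + [DW, Ad_{-W}(X)] + (1/2)[[DW,W], Ad_{-W}(X)] = Ad_{-W}(DX). -/
/-!
`Ad_{-W} = 1 - ad W + ½ (ad W)²`, and a derivation satisfies `[D, ad W] = ad (D W)`, so
`D ∘ Ad_{-W} - Ad_{-W} ∘ D = -ad (D W) + ½ (ad (D W) ∘ ad W + ad W ∘ ad (D W))`.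
In a 3-step nilpotent Lie algebra, applying `ad (D W) + ½ ad ⁅D W, W⁆` to `Ad_{-W} X` kills every
bracket of length four, and the Jacobi identity turns what remains into exactly the negative of
this commutator.
-/

section

variable {L : Type*} [LieRing L]

theorem lie_lie_lie_lie_eq_zero_of_three_step (h3 : ∀ X U V W : L, ⁅X, ⁅U, ⁅V, W⁆⁆⁆ = 0)
    (a b c d : L) : ⁅⁅a, b⁆, ⁅c, d⁆⁆ = 0 := by
  rw [lie_lie, h3, h3, sub_zero]

variable (K : Type*) [Field K] [LieAlgebra K L]

def truncAdNeg (W X : L) : L := X - ⁅W, X⁆ + (1 / 2 : K) • ⁅W, ⁅W, X⁆⁆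

theorem derivation_truncAdNeg_sub_truncAdNeg_derivation (D : L →ₗ[K] L)
    (hder : ∀ X Y : L, D ⁅X, Y⁆ = ⁅D X, Y⁆ + ⁅X, D Y⁆) (W X : L) :
    D (truncAdNeg K W X) - truncAdNeg K W (D X)
      = -⁅D W, X⁆ + (1 / 2 : K) • (⁅D W, ⁅W, X⁆⁆ + ⁅W, ⁅D W, X⁆⁆) := by
  simp only [truncAdNeg, map_add, map_sub, map_smul, hder, lie_add]
  module

theorem lie_truncAdNeg_of_three_step [CharZero K] (h3 : ∀ X U V W : L, ⁅X, ⁅U, ⁅V, W⁆⁆⁆ = 0)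
    (V W X : L) :
    ⁅V, truncAdNeg K W X⁆ + (1 / 2 : K) • ⁅⁅V, W⁆, truncAdNeg K W X⁆
      = ⁅V, X⁆ - (1 / 2 : K) • (⁅V, ⁅W, X⁆⁆ + ⁅W, ⁅V, X⁆⁆) := by
  have h4 := lie_lie_lie_lie_eq_zero_of_three_step h3
  simp only [truncAdNeg, lie_add, lie_sub, lie_smul, h3, h4, smul_zero, add_zero, sub_zero]
  rw [lie_lie]
  module

end

/-- For a derivation `D` of a 3-step nilpotent Lie algebra and
`Ad_{-W}(X) = X - [W,X] + ½[W,[W,X]]`, one has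
`D(Ad_{-W}X) + [DW, Ad_{-W}X] + ½[[DW,W], Ad_{-W}X] = Ad_{-W}(DX)`. -/
theorem derivation_Ad_identity_three_step
    {n : Type*} [LieRing n] [LieAlgebra ℝ n]
    (h3 : ∀ X U V W : n, ⁅X, ⁅U, ⁅V, W⁆⁆⁆ = 0)
    (D : n →ₗ[ℝ] n)
    (hder : ∀ X Y : n, D ⁅X, Y⁆ = ⁅D X, Y⁆ + ⁅X, D Y⁆)
    (W X : n) :
    D (X - ⁅W, X⁆ + (1/2 : ℝ) • ⁅W, ⁅W, X⁆⁆)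
      + ⁅D W, X - ⁅W, X⁆ + (1/2 : ℝ) • ⁅W, ⁅W, X⁆⁆⁆
      + (1/2 : ℝ) • ⁅⁅D W, W⁆, X - ⁅W, X⁆ + (1/2 : ℝ) • ⁅W, ⁅W, X⁆⁆⁆
      = D X - ⁅W, D X⁆ + (1/2 : ℝ) • ⁅W, ⁅W, D X⁆⁆ := by
  change D (truncAdNeg ℝ W X) + ⁅D W, truncAdNeg ℝ W X⁆
      + (1 / 2 : ℝ) • ⁅⁅D W, W⁆, truncAdNeg ℝ W X⁆ = truncAdNeg ℝ W (D X)
  have hcomm := derivation_truncAdNeg_sub_truncAdNeg_derivation ℝ D hder W X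
  have hbracket := lie_truncAdNeg_of_three_step ℝ h3 (D W) W X
  linear_combination (norm := module) hcomm + hbracket
end
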